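/- Let A ∈ ℝ^{m×n} and C ∈ ℝ^{m×c} satisfy ‖AAᵀ − CCᵀ‖₂ ≤ 3ε‖A‖_F². Then the sums of the top k squared singular values satisfy |Σ_{i=1}^k σ_i(C)² − Σ_{i=1}^k σ_i(A)²| ≤ 3εk‖A‖_F² for every k ≤ min(m, c, n). -/

import Mathlib

open Matrix

noncomputable def frobSq {m n : ℕ} (A : Matrix (Fin m) (Fin n) ℝ) : ℝ :=
  ∑ i, ∑ j, (A i j)^2

noncomputable def eunorm {m : ℕ} (v : Fin m → ℝ) : ℝ := Real.sqrt (v ⬝ᵥ v)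

lemma hermAAT {m n : ℕ} (A : Matrix (Fin m) (Fin n) ℝ) : (A * Aᵀ).IsHermitian := by
  have h : Aᵀ = Aᴴ := by
    ext i j
    simp [Matrix.conjTranspose_apply]
  rw [h]
  exact Matrix.isHermitian_mul_conjTranspose_self A

/-- `svalSq A k` : square of the `(k+1)`-st largest singular value of `A`
(eigenvalues of `A * Aᵀ` sorted in decreasing order), `0` beyond index `m`. -/
noncomputable def svalSq {m n : ℕ} (A : Matrix (Fin m) (Fin n) ℝ) (k : ℕ) : ℝ :=
  if k < m then
    (Multiset.sort (Finset.univ.val.map (hermAAT A).eigenvalues) (· ≤ ·)).getD (m - 1 - k) 0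
  else 0

/-- Spectral (operator) norm of a square real matrix. -/
noncomputable def specNorm {m : ℕ} (M : Matrix (Fin m) (Fin m) ℝ) : ℝ :=
  ‖Matrix.toEuclideanCLM (𝕜 := ℝ) M‖

/-!
Ky Fan's principle: for a symmetric operator `T` with eigenvalues `λ₁ ≥ λ₂ ≥ ⋯`, and any
orthonormal vectors `v₁, …, v_k`, `∑ ⟪T vᵢ, vᵢ⟫ ≤ λ₁ + ⋯ + λ_k`, because
`∑ ⟪T vᵢ, vᵢ⟫ = ∑ⱼ λⱼ sⱼ` with weights `0 ≤ sⱼ ≤ 1` (Bessel) summing to `k`.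
Testing the top `k` eigenvectors of `S` against `T` gives
`∑_{i<k} λᵢ(S) ≤ ∑_{i<k} λᵢ(T) + k ‖S - T‖`, and symmetrically. Applied to `S = AAᵀ`,
`T = CCᵀ`, whose eigenvalues are the squared singular values, this is the claim.
-/

open Finset RCLike Module

lemma Fin.sum_castLE_eq_sum_ite {M : Type*} [AddCommMonoid M] {n k : ℕ} (hk : k ≤ n)
    (f : Fin n → M) :
    ∑ i : Fin k, f (Fin.castLE hk i) = ∑ j : Fin n, if (j : ℕ) < k then f j else 0 := by
  rw [← sum_filter]
  refine (sum_map univ (Fin.castLEEmb hk) f).symm.trans ?_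
  congr 1
  ext j
  simpa using ⟨fun ⟨i, hi⟩ => hi ▸ i.isLt, fun h => ⟨⟨j, h⟩, rfl⟩⟩

lemma Antitone.sum_mul_le_sum_castLE {n k : ℕ} (hk : k ≤ n) {d : Fin n → ℝ} (hd : Antitone d)
    {s : Fin n → ℝ} (hs0 : ∀ j, 0 ≤ s j) (hs1 : ∀ j, s j ≤ 1) (hsum : ∑ j, s j = k) :
    ∑ j, d j * s j ≤ ∑ i : Fin k, d (Fin.castLE hk i) := by
  obtain ⟨t, ht_lt, ht_ge⟩ : ∃ t, (∀ j : Fin n, (j : ℕ) < k → t ≤ d j) ∧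
      (∀ j : Fin n, k ≤ (j : ℕ) → d j ≤ t) := by
    by_cases hkn : k < n
    · exact ⟨d ⟨k, hkn⟩, fun j hj => hd (Fin.mk_le_of_le_val hj.le),
        fun j hj => hd (Fin.le_iff_val_le_val.mpr hj)⟩
    · exact ⟨⨅ j, d j, fun j _ => ciInf_le (Finite.bddBelow_range d) j,
        fun j hj => absurd j.isLt (by omega)⟩
  set ind : Fin n → ℝ := fun j => if (j : ℕ) < k then 1 else 0
  have hind : ∑ j, ind j = k := by
    simpa [ind] using (Fin.sum_castLE_eq_sum_ite hk (fun _ => (1 : ℝ))).symm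
  have htop : ∑ i : Fin k, d (Fin.castLE hk i) = ∑ j, d j * ind j := by
    rw [Fin.sum_castLE_eq_sum_ite]
    simp [ind]
  -- `t` separates the top `k` values of `d` from the others, so each term is `≥ 0`
  have hpos : 0 ≤ ∑ j, (d j - t) * (ind j - s j) := by
    refine sum_nonneg fun j _ => ?_
    by_cases hj : (j : ℕ) < k
    · simp only [ind, if_pos hj]
      exact mul_nonneg (by linarith [ht_lt j hj]) (by linarith [hs1 j])
    · simp only [ind, if_neg hj, zero_sub]
      exact mul_nonneg_of_nonpos_of_nonpos (by linarith [ht_ge j (by omega)])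
        (by linarith [hs0 j])
  have hexpand : ∑ j, (d j - t) * (ind j - s j) =
      ∑ j, d j * ind j - ∑ j, d j * s j - t * (∑ j, ind j - ∑ j, s j) := by
    simp only [mul_sub, sub_mul, sum_sub_distrib, mul_sum]
    ring
  rw [hexpand, hind, hsum] at hpos
  linarith

namespace LinearMap.IsSymmetric

variable {𝕜 E : Type*} [RCLike 𝕜] [NormedAddCommGroup E] [InnerProductSpace 𝕜 E]
  [FiniteDimensional 𝕜 E] {n : ℕ} {T : E →ₗ[𝕜] E} (hT : T.IsSymmetric) (hn : finrank 𝕜 E = n)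

lemma re_inner_apply_self_eq_sum_eigenvalues (x : E) :
    re (inner 𝕜 (T x) x) =
      ∑ j, hT.eigenvalues hn j * ‖inner 𝕜 x (hT.eigenvectorBasis hn j)‖ ^ 2 := by
  set e := hT.eigenvectorBasis hn
  rw [← e.sum_inner_mul_inner (T x) x, map_sum]
  refine sum_congr rfl fun j _ => ?_
  rw [hT x (e j), apply_eigenvectorBasis, inner_smul_right, mul_assoc, re_ofReal_mul,
    inner_mul_symm_re_eq_norm, norm_mul, norm_inner_symm (e j) x, sq]

lemma re_inner_apply_eigenvectorBasis (j : Fin n) :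
    re (inner 𝕜 (T (hT.eigenvectorBasis hn j)) (hT.eigenvectorBasis hn j)) =
      hT.eigenvalues hn j := by
  rw [apply_eigenvectorBasis, inner_smul_left, inner_self_eq_norm_sq_to_K,
    (hT.eigenvectorBasis hn).orthonormal.1 j]
  simp

theorem sum_re_inner_le_sum_eigenvalues {k : ℕ} (hk : k ≤ n) {v : Fin k → E}
    (hv : Orthonormal 𝕜 v) :
    ∑ i, re (inner 𝕜 (T (v i)) (v i)) ≤ ∑ i : Fin k, hT.eigenvalues hn (Fin.castLE hk i) := by
  set e := hT.eigenvectorBasis hn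
  set s : Fin n → ℝ := fun j => ∑ i, ‖inner 𝕜 (v i) (e j)‖ ^ 2
  have hquad : ∑ i, re (inner 𝕜 (T (v i)) (v i)) = ∑ j, hT.eigenvalues hn j * s j := by
    simp only [hT.re_inner_apply_self_eq_sum_eigenvalues hn, s, mul_sum]
    exact sum_comm
  have hs1 : ∀ j, s j ≤ 1 := fun j => by
    simpa [s, e.orthonormal.1 j] using hv.sum_inner_products_le (e j) (s := univ)
  have hsum : ∑ j, s j = k := by
    simp only [s]
    rw [sum_comm]
    simp [e.sum_sq_norm_inner_left, hv.1]
  rw [hquad]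
  exact Antitone.sum_mul_le_sum_castLE hk (hT.eigenvalues_antitone hn)
    (fun j => sum_nonneg fun i _ => sq_nonneg _) hs1 hsum

theorem sum_eigenvalues_le_of_re_inner_sub_le {S : E →ₗ[𝕜] E} (hS : S.IsSymmetric) {δ : ℝ}
    (hδ : ∀ x, re (inner 𝕜 ((S - T) x) x) ≤ δ * ‖x‖ ^ 2) {k : ℕ} (hk : k ≤ n) :
    ∑ i : Fin k, hS.eigenvalues hn (Fin.castLE hk i) ≤
      ∑ i : Fin k, hT.eigenvalues hn (Fin.castLE hk i) + k * δ := by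
  set u : Fin k → E := hS.eigenvectorBasis hn ∘ Fin.castLE hk
  have hu : Orthonormal 𝕜 u :=
    (hS.eigenvectorBasis hn).orthonormal.comp _ (Fin.castLE_injective hk)
  have hcompare : ∀ i, re (inner 𝕜 (S (u i)) (u i)) ≤ re (inner 𝕜 (T (u i)) (u i)) + δ :=
    fun i => by
      have := hδ (u i)
      rw [LinearMap.sub_apply, inner_sub_left, map_sub, hu.1 i] at this
      linarith
  calc ∑ i : Fin k, hS.eigenvalues hn (Fin.castLE hk i)
      = ∑ i, re (inner 𝕜 (S (u i)) (u i)) := by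
        simp only [u, Function.comp_apply, hS.re_inner_apply_eigenvectorBasis hn]
    _ ≤ ∑ i, (re (inner 𝕜 (T (u i)) (u i)) + δ) := sum_le_sum fun i _ => hcompare i
    _ ≤ ∑ i : Fin k, hT.eigenvalues hn (Fin.castLE hk i) + k * δ := by
        rw [sum_add_distrib, sum_const, card_univ, Fintype.card_fin, nsmul_eq_mul]
        exact add_le_add_left (hT.sum_re_inner_le_sum_eigenvalues hn hk hu) _

theorem abs_sum_eigenvalues_sub_le {S : E →ₗ[𝕜] E} (hS : S.IsSymmetric) {δ : ℝ}
    (hδ : ∀ x, |re (inner 𝕜 ((S - T) x) x)| ≤ δ * ‖x‖ ^ 2) {k : ℕ} (hk : k ≤ n) :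
    |∑ i : Fin k, hS.eigenvalues hn (Fin.castLE hk i) -
      ∑ i : Fin k, hT.eigenvalues hn (Fin.castLE hk i)| ≤ k * δ := by
  have hδ' : ∀ x, re (inner 𝕜 ((T - S) x) x) ≤ δ * ‖x‖ ^ 2 := fun x => by
    rw [← neg_sub, LinearMap.neg_apply, inner_neg_left, map_neg]
    exact (neg_le_abs _).trans (hδ x)
  rw [abs_sub_le_iff]
  constructor
  · linarith [hT.sum_eigenvalues_le_of_re_inner_sub_le hn hS
      (fun x => (le_abs_self _).trans (hδ x)) hk]
  · linarith [hS.sum_eigenvalues_le_of_re_inner_sub_le hn hT hδ' hk]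

end LinearMap.IsSymmetric

lemma Matrix.IsHermitian.sort_eigenvalues_eq_reverse {m : ℕ} {P : Matrix (Fin m) (Fin m) ℝ}
    (hP : P.IsHermitian) :
    Multiset.sort (univ.val.map hP.eigenvalues) (· ≤ ·) = (List.ofFn hP.eigenvalues₀).reverse := by
  refine List.Perm.eq_of_pairwise' (Multiset.pairwise_sort _ _)
    (List.pairwise_reverse.mpr hP.eigenvalues₀_antitone.sortedGE_ofFn.pairwise) ?_
  have hmap : univ.val.map hP.eigenvalues = univ.val.map hP.eigenvalues₀ := by
    simpa using hP.roots_charpoly_eq_eigenvalues.symm.trans hP.roots_charpoly_eq_eigenvalues₀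
  rw [← Multiset.coe_eq_coe, Multiset.sort_eq, Multiset.coe_reverse, ← Fin.univ_val_map, hmap]

lemma svalSq_eq_eigenvalues₀ {m n : ℕ} (A : Matrix (Fin m) (Fin n) ℝ) {k : ℕ} (hk : k < m) :
    svalSq A k = (hermAAT A).eigenvalues₀ ⟨k, by simpa using hk⟩ := by
  rw [svalSq, if_pos hk, (hermAAT A).sort_eigenvalues_eq_reverse,
    List.getD_eq_getElem _ _ (by simp; omega), List.getElem_reverse, List.getElem_ofFn]
  congr
  simp
  omega

lemma sum_range_svalSq {m n : ℕ} (A : Matrix (Fin m) (Fin n) ℝ) {k : ℕ} (hk : k ≤ m) :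
    ∑ i ∈ range k, svalSq A i =
      ∑ i : Fin k, (hermAAT A).eigenvalues₀ (Fin.castLE (by simpa using hk) i) := by
  rw [← Fin.sum_univ_eq_sum_range]
  exact sum_congr rfl fun i _ => svalSq_eq_eigenvalues₀ A (i.2.trans_le hk)

open RealInnerProductSpace in
lemma abs_inner_toEuclideanLin_le_specNorm {m : ℕ} (M : Matrix (Fin m) (Fin m) ℝ)
    (x : EuclideanSpace ℝ (Fin m)) : |⟪toEuclideanLin M x, x⟫| ≤ specNorm M * ‖x‖ ^ 2 := by
  calc |⟪toEuclideanLin M x, x⟫| ≤ ‖toEuclideanCLM (𝕜 := ℝ) M x‖ * ‖x‖ :=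
        abs_real_inner_le_norm _ _
    _ ≤ specNorm M * ‖x‖ * ‖x‖ := by
        gcongr
        exact (toEuclideanCLM (𝕜 := ℝ) M).le_opNorm x
    _ = specNorm M * ‖x‖ ^ 2 := by ring

theorem stmt13 {m n c : ℕ} (A : Matrix (Fin m) (Fin n) ℝ) (C : Matrix (Fin m) (Fin c) ℝ)
    (ε : ℝ) (h : specNorm (A * Aᵀ - C * Cᵀ) ≤ 3 * ε * frobSq A) :
    ∀ k : ℕ, k ≤ min m (min c n) →
      |∑ i ∈ Finset.range k, svalSq C i - ∑ i ∈ Finset.range k, svalSq A i| ≤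
        3 * ε * k * frobSq A := by
  intro k hk
  have hkm : k ≤ m := hk.trans (min_le_left _ _)
  have hperturb := (isSymmetric_toEuclideanLin_iff.mpr (hermAAT C)).abs_sum_eigenvalues_sub_le
    finrank_euclideanSpace (isSymmetric_toEuclideanLin_iff.mpr (hermAAT A))
    (fun x => by
      rw [← map_sub, RCLike.re_to_real]
      exact abs_inner_toEuclideanLin_le_specNorm (A * Aᵀ - C * Cᵀ) x)
    (by simpa using hkm)
  rw [sum_range_svalSq C hkm, sum_range_svalSq A hkm, abs_sub_comm]
  calc _ ≤ k * specNorm (A * Aᵀ - C * Cᵀ) := hperturb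
    _ ≤ k * (3 * ε * frobSq A) := by gcongr
    _ = 3 * ε * k * frobSq A := by ring
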